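/- arXiv:1401.7927 — 2 statements merged into one kernel-verified Lean document; each statement's English description precedes it below -/
import Mathlib

section
/- Let D be a subset of ℤ² with the 2ℤ-property, i.e., every point (m,n) ∈ ℤ² with m even belongs to D. Let f : D → ℤ² be L-bi-Lipschitz (for the Euclidean metric), meaning ‖x-y‖/L ≤ ‖f(x)-f(y)‖ ≤ L‖x-y‖ for all x,y ∈ D. Define the extension f̂ : ℤ² → (1/2)ℤ² by f̂(x) = f(x) if x ∈ D, and f̂(x) = f(x+(1,0)) - (1/2, 0) if x ∉ D. Then f̂ is 6L-bi-Lipschitz. -/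
/-!
Off `D` the extension copies `f` from the neighbour `x + (1, 0) ∈ D` and moves it by `(1/2, 0)`.
Both shifts change distances by at most one, which is harmless against distances `≥ 1` between
distinct lattice points; the only danger is that `f̂ x` and `f̂ y` come close, and this cannot
happen because `f̂ x` has half-integral and `f̂ y` integral first coordinate, so they stay `1/2` apart.
-/

noncomputable def e2 (p : ℤ × ℤ) : EuclideanSpace ℝ (Fin 2) := WithLp.toLp 2 ![(p.1 : ℝ), (p.2 : ℝ)]

lemma e2_add (p q : ℤ × ℤ) : e2 (p + q) = e2 p + e2 q := by
  ext i; fin_cases i <;> simp [e2]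

lemma e2_sub (p q : ℤ × ℤ) : e2 (p - q) = e2 p - e2 q := by
  ext i; fin_cases i <;> simp [e2]

lemma norm_e2_one_zero : ‖e2 (1, 0)‖ = 1 := by
  simp [e2, EuclideanSpace.norm_eq, Fin.sum_univ_two]

lemma one_le_norm_e2 {p : ℤ × ℤ} (hp : p ≠ 0) : 1 ≤ ‖e2 p‖ := by
  obtain ⟨a, b⟩ := p
  rcases not_and_or.mp (Prod.mk_eq_zero.not.mp hp) with ha | hb
  · calc (1 : ℝ) ≤ |(a : ℝ)| := by exact_mod_cast Int.one_le_abs ha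
      _ ≤ _ := PiLp.norm_apply_le (e2 (a, b)) 0
  · calc (1 : ℝ) ≤ |(b : ℝ)| := by exact_mod_cast Int.one_le_abs hb
      _ ≤ _ := PiLp.norm_apply_le (e2 (a, b)) 1

lemma one_le_norm_e2_sub_e2 {p q : ℤ × ℤ} (h : p ≠ q) : 1 ≤ ‖e2 p - e2 q‖ :=
  e2_sub p q ▸ one_le_norm_e2 (sub_ne_zero.mpr h)

lemma half_le_norm_e2_sub_half (p : ℤ × ℤ) : 1 / 2 ≤ ‖e2 p - (1 / 2 : ℝ) • e2 (1, 0)‖ := by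
  have hfirst : 1 / 2 ≤ |(p.1 : ℝ) - 1 / 2| := by
    rcases le_or_gt p.1 0 with h | h
    · have : (p.1 : ℝ) ≤ 0 := by exact_mod_cast h
      rw [abs_of_neg (by linarith)]; linarith
    · have : (1 : ℝ) ≤ p.1 := by exact_mod_cast h
      rw [abs_of_pos (by linarith)]; linarith
  calc (1 / 2 : ℝ) ≤ |(p.1 : ℝ) - 1 / 2| := hfirst
    _ ≤ _ := by simpa [e2] using PiLp.norm_apply_le (e2 p - (1 / 2 : ℝ) • e2 (1, 0)) 0

lemma abs_norm_e2_add_sub_le (x y s : ℤ × ℤ) :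
    |‖e2 (x + s) - e2 y‖ - ‖e2 x - e2 y‖| ≤ ‖e2 s‖ := by
  simpa [e2_add] using abs_norm_sub_norm_le (e2 (x + s) - e2 y) (e2 x - e2 y)

lemma bilipschitz_bound_mono {L L' a b : ℝ} (hL : 0 < L) (hLL' : L ≤ L') (ha : 0 ≤ a)
    (h : a / L ≤ b ∧ b ≤ L * a) : a / L' ≤ b ∧ b ≤ L' * a :=
  ⟨(div_le_div_of_nonneg_left ha hL hLL').trans h.1,
    h.2.trans (mul_le_mul_of_nonneg_right hLL' ha)⟩

/-- `d` is a distance in the domain, `d'` the distance after moving one point by a unit,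
`A` the distance of the images of the moved pair, and `N` that distance after moving one image
by `1/2`. -/
lemma bilipschitz_bound_of_perturb {L d d' A N : ℝ} (hL : 1 ≤ L) (hd : 1 ≤ d)
    (hd' : |d' - d| ≤ 1) (hA : d' / L ≤ A ∧ A ≤ L * d') (hN : |N - A| ≤ 1 / 2)
    (hN_half : 1 / 2 ≤ N) : d / (6 * L) ≤ N ∧ N ≤ 6 * L * d := by
  have hL0 : 0 < L := by linarith
  obtain ⟨hA_low, hA_up⟩ := hA
  rw [div_le_iff₀ hL0] at hA_low
  obtain ⟨hd'_low, hd'_up⟩ := abs_le.mp hd'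
  obtain ⟨hN_low, hN_up⟩ := abs_le.mp hN
  refine ⟨?_, by nlinarith⟩
  rw [div_le_iff₀ (by positivity)]
  -- short distances are covered by `N ≥ 1/2`, long ones by `N ≥ A - 1/2 ≥ (d - 1) / L - 1/2`
  rcases le_or_gt d (3 * L) with h | h <;> nlinarith

lemma add_one_zero_mem_of_not_mem {D : Set (ℤ × ℤ)} (hD : ∀ m n : ℤ, Even m → (m, n) ∈ D)
    {x : ℤ × ℤ} (hx : x ∉ D) : x + (1, 0) ∈ D := by
  obtain ⟨m, n⟩ := x
  exact hD (m + 1) (n + 0) (Int.even_add_one.mpr fun hm => hx (hD m n hm))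

theorem stmt0 (L : ℝ) (hL : 1 ≤ L) (D : Set (ℤ × ℤ))
    (hD : ∀ m n : ℤ, Even m → (m, n) ∈ D)
    (f : ℤ × ℤ → ℤ × ℤ)
    (hf : ∀ x ∈ D, ∀ y ∈ D,
      ‖e2 x - e2 y‖ / L ≤ ‖e2 (f x) - e2 (f y)‖ ∧
      ‖e2 (f x) - e2 (f y)‖ ≤ L * ‖e2 x - e2 y‖)
    (fhat : ℤ × ℤ → EuclideanSpace ℝ (Fin 2))
    (hfhat₁ : ∀ x ∈ D, fhat x = e2 (f x))
    (hfhat₂ : ∀ x ∉ D, fhat x = e2 (f (x + (1, 0))) - (1 / 2 : ℝ) • e2 (1, 0)) :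
    ∀ x y : ℤ × ℤ,
      ‖e2 x - e2 y‖ / (6 * L) ≤ ‖fhat x - fhat y‖ ∧
      ‖fhat x - fhat y‖ ≤ 6 * L * ‖e2 x - e2 y‖ := by
  have hL0 : 0 < L := by linarith
  have shift_mem : ∀ x ∉ D, x + (1, 0) ∈ D := fun x => add_one_zero_mem_of_not_mem hD
  have mixed : ∀ x ∉ D, ∀ y ∈ D,
      ‖e2 x - e2 y‖ / (6 * L) ≤ ‖fhat x - fhat y‖ ∧ ‖fhat x - fhat y‖ ≤ 6 * L * ‖e2 x - e2 y‖ := by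
    intro x hx y hy
    rw [hfhat₂ x hx, hfhat₁ y hy, sub_right_comm]
    refine bilipschitz_bound_of_perturb hL (one_le_norm_e2_sub_e2 fun h => hx (h ▸ hy))
      ((abs_norm_e2_add_sub_le x y (1, 0)).trans_eq norm_e2_one_zero)
      (hf _ (shift_mem x hx) y hy) ?_ ?_
    · refine (abs_norm_sub_norm_le _ _).trans_eq ?_
      rw [sub_sub_cancel_left, norm_neg, norm_smul, norm_e2_one_zero]
      norm_num
    · rw [← e2_sub]; exact half_le_norm_e2_sub_half _
  intro x y
  by_cases hx : x ∈ D <;> by_cases hy : y ∈ D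
  · rw [hfhat₁ x hx, hfhat₁ y hy]
    exact bilipschitz_bound_mono hL0 (by linarith) (norm_nonneg _) (hf x hx y hy)
  · simpa only [norm_sub_rev] using mixed y hy x hx
  · exact mixed x hx y hy
  · rw [hfhat₂ x hx, hfhat₂ y hy, sub_sub_sub_cancel_right]
    have hshift : e2 (x + (1, 0)) - e2 (y + (1, 0)) = e2 x - e2 y := by
      simp only [e2_add, add_sub_add_right_eq_sub]
    simpa only [hshift] using bilipschitz_bound_mono hL0 (by linarith) (norm_nonneg _)
      (hf _ (shift_mem x hx) _ (shift_mem y hy))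
end

section
/- Let γ be a rectifiable curve in ℝ² with length(γ) ≥ 4, and let T be a real number with 1 ≤ T ≤ length(γ)/4. Then the number of lattice points x ∈ ℤ² with dist(x, γ) ≤ T is at most 25 · T · length(γ). -/
open Set Filter Topology Metric

namespace variationOnFromTo

variable {α : Type*} [LinearOrder α] [TopologicalSpace α] [OrderTopology α]
  {E : Type*} [PseudoEMetricSpace E] {f : α → E} {s : Set α}

theorem tendsto_zero_of_continuousWithinAt (hf : BoundedVariationOn f s) {x : α}
    (hc : ContinuousWithinAt f s x) :
    Tendsto (variationOnFromTo f s x) (𝓝[s] x) (𝓝 0) := by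
  have hR := (ENNReal.tendsto_toReal ENNReal.zero_ne_top).comp
    (hf.tendsto_eVariationOn_Icc_zero_right x (hc.mono inter_subset_left))
  have hL := (ENNReal.tendsto_toReal ENNReal.zero_ne_top).comp
    (hf.tendsto_eVariationOn_Icc_zero_left (hc.mono inter_subset_left))
  refine (sub_zero (0 : ℝ) ▸ hR.sub hL).congr fun y ↦ ?_
  simp only [Function.comp_apply]
  rcases le_total x y with hxy | hyx
  · rw [eVariationOn.subsingleton f ((subsingleton_Icc_of_ge hxy).anti inter_subset_right),
      ENNReal.toReal_zero, sub_zero, variationOnFromTo.eq_of_le f s hxy]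
  · rw [eVariationOn.subsingleton f ((subsingleton_Icc_of_ge hyx).anti inter_subset_right),
      ENNReal.toReal_zero, zero_sub, variationOnFromTo.eq_of_ge f s hyx]

theorem continuousOn (hf : BoundedVariationOn f s) (hc : ContinuousOn f s) {a : α} (ha : a ∈ s) :
    ContinuousOn (variationOnFromTo f s a) s := by
  intro x hx
  have h := (tendsto_zero_of_continuousWithinAt hf (hc x hx)).const_add
    (variationOnFromTo f s a x)
  rw [add_zero] at h
  refine h.congr' (eventually_nhdsWithin_of_forall fun y hy ↦ ?_)
  exact variationOnFromTo.add hf.locallyBoundedVariationOn ha hx hy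

end variationOnFromTo

theorem variationOnFromTo.dist_le_abs {α : Type*} [LinearOrder α] {E : Type*}
    [PseudoMetricSpace E] {f : α → E} {s : Set α} (hf : LocallyBoundedVariationOn f s) {x y : α} (hx : x ∈ s) (hy : y ∈ s) :
    dist (f x) (f y) ≤ |variationOnFromTo f s x y| := by
  rcases le_total x y with hxy | hyx
  · rw [variationOnFromTo.eq_of_le f s hxy, abs_of_nonneg ENNReal.toReal_nonneg]
    exact (hf x y hx hy).dist_le ⟨hx, le_rfl, hxy⟩ ⟨hy, hxy, le_rfl⟩
  · rw [variationOnFromTo.eq_of_ge f s hyx, abs_neg, abs_of_nonneg ENNReal.toReal_nonneg,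
      dist_comm]
    exact (hf y x hy hx).dist_le ⟨hy, le_rfl, hyx⟩ ⟨hx, hyx, le_rfl⟩

theorem exists_lt_floor_div_add_one_abs_sub_min_le {ℓ r v : ℝ} (hr : 0 < r) (hv : 0 ≤ v)
    (hvℓ : v ≤ ℓ) : ∃ i < ⌊ℓ / (2 * r)⌋₊ + 1, |v - min ((2 * i + 1) * r) ℓ| ≤ r := by
  refine ⟨⌊v / (2 * r)⌋₊, Nat.lt_succ_of_le (Nat.floor_le_floor (by gcongr)), ?_⟩
  have hlo : ⌊v / (2 * r)⌋₊ * (2 * r) ≤ v :=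
    (le_div_iff₀ (by positivity)).mp (Nat.floor_le (div_nonneg hv (by positivity)))
  have hhi : v < (⌊v / (2 * r)⌋₊ + 1) * (2 * r) :=
    (div_lt_iff₀ (by positivity)).mp (Nat.lt_floor_add_one _)
  rw [abs_le]
  rcases le_total ((2 * ⌊v / (2 * r)⌋₊ + 1) * r) ℓ with h | h
  · rw [min_eq_left h]; constructor <;> nlinarith
  · rw [min_eq_right h]; constructor <;> nlinarith

theorem BoundedVariationOn.exists_finset_card_le_image_subset_biUnion_closedBall
    {E : Type*} [PseudoMetricSpace E] {f : ℝ → E} {a b : ℝ} (hab : a ≤ b)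
    (hf : BoundedVariationOn f (Icc a b)) (hc : ContinuousOn f (Icc a b)) {r : ℝ} (hr : 0 < r) :
    ∃ C : Finset E, C.card ≤ ⌊(eVariationOn f (Icc a b)).toReal / (2 * r)⌋₊ + 1 ∧
      f '' Icc a b ⊆ ⋃ c ∈ C, Metric.closedBall c r := by
  classical
  set ℓ := (eVariationOn f (Icc a b)).toReal
  set V := variationOnFromTo f (Icc a b) a
  have ha : a ∈ Icc a b := left_mem_Icc.mpr hab
  have hb : b ∈ Icc a b := right_mem_Icc.mpr hab
  have hVmono := variationOnFromTo.monotoneOn hf.locallyBoundedVariationOn ha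
  have hVa : V a = 0 := variationOnFromTo.self f _ a
  have hVb : V b = ℓ := by
    simp only [V, variationOnFromTo.eq_of_le f _ hab, inter_self, ℓ]
  have hV : ∀ t ∈ Icc a b, 0 ≤ V t ∧ V t ≤ ℓ := fun t ht ↦
    ⟨hVa ▸ hVmono ha ht ht.1, hVb ▸ hVmono ht hb ht.2⟩
  -- points at arc length `r, 3r, 5r, …` (capped at `ℓ`) are the centres
  have hmid : ∀ i : ℕ, ∃ c ∈ Icc a b, V c = min ((2 * i + 1) * r) ℓ := fun i ↦
    intermediate_value_Icc hab (variationOnFromTo.continuousOn hf hc ha)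
      ⟨hVa.trans_le (le_min (by positivity) (hVb ▸ (hV b hb).1)), (min_le_right _ _).trans hVb.ge⟩
  choose c hcI hcV using hmid
  refine ⟨(Finset.range (⌊ℓ / (2 * r)⌋₊ + 1)).image (f ∘ c),
    Finset.card_image_le.trans (Finset.card_range _).le, ?_⟩
  rintro _ ⟨t, ht, rfl⟩
  obtain ⟨i, hi, hti⟩ := exists_lt_floor_div_add_one_abs_sub_min_le hr (hV t ht).1 (hV t ht).2
  refine mem_biUnion (Finset.mem_coe.mpr (Finset.mem_image_of_mem _ (Finset.mem_range.mpr hi))) ?_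
  calc dist (f t) (f (c i)) ≤ |variationOnFromTo f (Icc a b) t (c i)| :=
        variationOnFromTo.dist_le_abs hf.locallyBoundedVariationOn ht (hcI i)
    _ = |V t - V (c i)| := by
        rw [← variationOnFromTo.sub_right hf.locallyBoundedVariationOn ha (hcI i) ht, abs_sub_comm]
    _ ≤ r := hcV i ▸ hti

theorem card_Icc_ceil_floor_le {u v : ℝ} (h : u ≤ v + 1) :
    ((Finset.Icc ⌈u⌉ ⌊v⌋).card : ℝ) ≤ v - u + 1 := by
  rw [Int.card_Icc]
  rcases le_total (⌊v⌋ + 1 - ⌈u⌉) 0 with hneg | hpos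
  · rw [Int.toNat_of_nonpos hneg]
    push_cast
    linarith
  · have hcast : ((⌊v⌋ + 1 - ⌈u⌉).toNat : ℝ) = ⌊v⌋ + 1 - ⌈u⌉ := by
      exact_mod_cast Int.toNat_of_nonneg hpos
    rw [hcast]
    linarith [Int.floor_le v, Int.le_ceil u]

noncomputable def latticeBox (c : EuclideanSpace ℝ (Fin 2)) (ρ : ℝ) : Finset (ℤ × ℤ) :=
  Finset.Icc (⌈c 0 - ρ⌉, ⌈c 1 - ρ⌉) (⌊c 0 + ρ⌋, ⌊c 1 + ρ⌋)

theorem card_latticeBox_le (c : EuclideanSpace ℝ (Fin 2)) {ρ : ℝ} (hρ : 0 ≤ ρ) :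
    ((latticeBox c ρ).card : ℝ) ≤ (2 * ρ + 1) ^ 2 := by
  rw [latticeBox, Finset.card_Icc_prod, Nat.cast_mul, sq]
  have h0 := card_Icc_ceil_floor_le (u := c 0 - ρ) (v := c 0 + ρ) (by linarith)
  have h1 := card_Icc_ceil_floor_le (u := c 1 - ρ) (v := c 1 + ρ) (by linarith)
  calc _ ≤ (c 0 + ρ - (c 0 - ρ) + 1) * (c 1 + ρ - (c 1 - ρ) + 1) :=
        mul_le_mul h0 h1 (Nat.cast_nonneg _) (by linarith)
    _ = (2 * ρ + 1) * (2 * ρ + 1) := by ring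

theorem mem_latticeBox_of_dist_le {x : ℤ × ℤ} {c : EuclideanSpace ℝ (Fin 2)} {ρ : ℝ}
    (h : dist (e2 x) c ≤ ρ) : x ∈ latticeBox c ρ := by
  have h0 : |(x.1 : ℝ) - c 0| ≤ ρ := (PiLp.dist_apply_le (e2 x) c 0).trans h
  have h1 : |(x.2 : ℝ) - c 1| ≤ ρ := (PiLp.dist_apply_le (e2 x) c 1).trans h
  rw [abs_le] at h0 h1
  simp only [latticeBox, Finset.mem_Icc, Prod.le_def, Int.ceil_le, Int.le_floor]
  exact ⟨⟨by linarith, by linarith⟩, by linarith, by linarith⟩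

theorem ncard_setOf_infDist_le_le {K : Set (EuclideanSpace ℝ (Fin 2))} (hK : IsCompact K)
    (hKne : K.Nonempty) {C : Finset (EuclideanSpace ℝ (Fin 2))} {r ρ : ℝ} (hr : 0 ≤ r)
    (hρ : 0 ≤ ρ) (hKC : K ⊆ ⋃ c ∈ C, closedBall c r) :
    ({x : ℤ × ℤ | infDist (e2 x) K ≤ ρ}.ncard : ℝ) ≤ C.card * (2 * (r + ρ) + 1) ^ 2 := by
  have hsub : {x : ℤ × ℤ | infDist (e2 x) K ≤ ρ} ⊆ C.biUnion (latticeBox · (r + ρ)) := by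
    intro x (hx : infDist (e2 x) K ≤ ρ)
    obtain ⟨y, hyK, hxy⟩ := hK.exists_infDist_eq_dist hKne (e2 x)
    obtain ⟨c, hc, hyc⟩ := mem_iUnion₂.mp (hKC hyK)
    refine Finset.mem_biUnion.mpr ⟨c, hc, mem_latticeBox_of_dist_le ?_⟩
    calc dist (e2 x) c ≤ dist (e2 x) y + dist y c := dist_triangle _ _ _
      _ ≤ r + ρ := by rw [← hxy]; linarith [mem_closedBall.mp hyc]
  calc ({x : ℤ × ℤ | infDist (e2 x) K ≤ ρ}.ncard : ℝ)
      ≤ (C.biUnion (latticeBox · (r + ρ))).card := by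
        exact_mod_cast (ncard_le_ncard hsub (Finset.finite_toSet _)).trans_eq (ncard_coe_finset _)
    _ ≤ ∑ c ∈ C, ((latticeBox c (r + ρ)).card : ℝ) := by exact_mod_cast Finset.card_biUnion_le
    _ ≤ ∑ _c ∈ C, (2 * (r + ρ) + 1) ^ 2 :=
        Finset.sum_le_sum fun c _ ↦ card_latticeBox_le c (add_nonneg hr hρ)
    _ = C.card * (2 * (r + ρ) + 1) ^ 2 := by rw [Finset.sum_const, nsmul_eq_mul]

theorem stmt1_general (γ : ℝ → EuclideanSpace ℝ (Fin 2))
    (hcont : ContinuousOn γ (Set.Icc 0 1))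
    (ℓ T : ℝ)
    (hlen : eVariationOn γ (Set.Icc 0 1) = ENNReal.ofReal ℓ)
    (hT1 : 1 ≤ T) (hT2 : T ≤ ℓ / 4) :
    ((Set.ncard {x : ℤ × ℤ | Metric.infDist (e2 x) (γ '' Set.Icc 0 1) ≤ T}) : ℝ)
      ≤ 25 * T * ℓ := by
  have hT : 0 < T := by linarith
  have hbv : BoundedVariationOn γ (Icc 0 1) := by
    rw [BoundedVariationOn, hlen]
    exact ENNReal.ofReal_ne_top
  obtain ⟨C, hCcard, hcover⟩ :=
    hbv.exists_finset_card_le_image_subset_biUnion_closedBall zero_le_one hcont hT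
  rw [hlen, ENNReal.toReal_ofReal (by linarith)] at hCcard
  have hC : (C.card : ℝ) ≤ ℓ / (2 * T) + 1 := by
    refine (Nat.cast_le.mpr hCcard).trans ?_
    push_cast
    exact add_le_add_left (Nat.floor_le (div_nonneg (by linarith) (by positivity))) 1
  calc _ ≤ C.card * (2 * (T + T) + 1) ^ 2 :=
        ncard_setOf_infDist_le_le (isCompact_Icc.image_of_continuousOn hcont)
          ((nonempty_Icc.mpr zero_le_one).image γ) hT.le hT.le hcover
    _ ≤ (ℓ / (2 * T) + 1) * (5 * T) ^ 2 := by gcongr <;> linarith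
    _ = 25 / 2 * T * ℓ + 25 * T ^ 2 := by field_simp; ring
    _ ≤ 25 * T * ℓ := by nlinarith

theorem stmt1 (γ : ℝ → EuclideanSpace ℝ (Fin 2))
    (hcont : ContinuousOn γ (Set.Icc 0 1))
    (ℓ T : ℝ)
    (hlen : eVariationOn γ (Set.Icc 0 1) = ENNReal.ofReal ℓ)
    (hl4 : 4 ≤ ℓ) (hT1 : 1 ≤ T) (hT2 : T ≤ ℓ / 4) :
    ((Set.ncard {x : ℤ × ℤ | Metric.infDist (e2 x) (γ '' Set.Icc 0 1) ≤ T}) : ℝ)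
      ≤ 25 * T * ℓ :=
  stmt1_general γ hcont ℓ T hlen hT1 hT2
end
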